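/- arXiv:1203.3691 — 3 statements merged into one kernel-verified Lean document; each statement's English description precedes it below -/
import Mathlib

section
/- Let b = exp(−iπ/3), let j₆(u,v) = (2−8b)u³ − b·u⁶ + 6uv + 6b·u⁴v − (9/2)u²v², and define J₆ : ℝ² → ℝ by J₆(x,y) = −1 + 2·Re(j₆(x+iy, x−iy)). Identify ℝ² with ℂ via (x,y) ↦ x+iy, and set α = exp(iπ/9), r = exp(2πi/3). Then at each of the seven points 0, α, rα, r²α, 2, 2r, 2r² the gradient of J₆ vanishes and J₆ takes the value −1; and at each of the three points conj(α), conj(rα), conj(r²α) the gradient of J₆ vanishes and J₆ takes the value 8. -/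
/-!
Everything reduces to arithmetic with `b = bC`, a root of `b² - b + 1 = 0`. The Wirtinger
derivative `∂J₆/∂z` vanishes exactly where the gradient does, and both `j₆(z, z̄)` and
`z · ∂J₆/∂z` depend on `z` only through `z³` and `z z̄`: every monomial of `j₆(u, v)` is a
product of `u³` and `uv`. Apart from `0`, the given points have `(z³, z z̄) = (b̄, 1)`, `(8, 4)`
or `(b, 1)`, and for each of these pairs the two expressions reduce modulo `b² - b + 1`.
-/

noncomputable section

/-- `bC = exp(-iπ/3)`. -/
def bC : ℂ := Complex.exp (-((Real.pi : ℂ) / 3) * Complex.I)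

/-- The polynomial `j6(u,v)`. -/
def j6 (u v : ℂ) : ℂ := (2 - 8*bC)*u^3 - bC*u^6 + 6*u*v + 6*bC*u^4*v - (9/2)*u^2*v^2

/-- The real folding-type polynomial `J6(x,y) = -1 + 2 Re(j6(x+iy, x-iy))`, as a
function on `ℝ × ℝ`. -/
def J6 : ℝ × ℝ → ℝ := fun p =>
  -1 + 2 * (j6 ((p.1 : ℂ) + (p.2 : ℂ) * Complex.I) ((p.1 : ℂ) - (p.2 : ℂ) * Complex.I)).re

/-- Partial derivative in the first variable. -/
def pdx (f : ℝ × ℝ → ℝ) (p : ℝ × ℝ) : ℝ := deriv (fun t => f (t, p.2)) p.1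

/-- Partial derivative in the second variable. -/
def pdy (f : ℝ × ℝ → ℝ) (p : ℝ × ℝ) : ℝ := deriv (fun t => f (p.1, t)) p.2

/-- Determinant of the Hessian matrix of `f` at `p`. -/
def hessDet2 (f : ℝ × ℝ → ℝ) (p : ℝ × ℝ) : ℝ :=
  pdx (pdx f) p * pdy (pdy f) p - pdx (pdy f) p * pdy (pdx f) p

/-- `α = exp(iπ/9)`. -/
def α : ℂ := Complex.exp ((Real.pi : ℂ) / 9 * Complex.I)

/-- `r = exp(2πi/3)`. -/
def r : ℂ := Complex.exp (2 * (Real.pi : ℂ) / 3 * Complex.I)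

open Complex ComplexConjugate

lemma bC_eq : bC = 1 / 2 - (Real.sqrt 3 / 2 : ℝ) * I := by
  rw [bC, show -((Real.pi : ℂ) / 3) * I = ((-(Real.pi / 3) : ℝ) : ℂ) * I by push_cast; ring,
    exp_mul_I, ← ofReal_cos, ← ofReal_sin, Real.cos_neg, Real.sin_neg, Real.cos_pi_div_three,
    Real.sin_pi_div_three]
  push_cast
  ring

lemma bC_re : bC.re = 1 / 2 := by simp [bC_eq]

lemma conj_bC : conj bC = 1 - bC := by
  have h := add_conj bC
  rw [bC_re] at h
  push_cast at h
  linear_combination h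

lemma bC_sq : bC ^ 2 = bC - 1 := by
  have h3 : ((Real.sqrt 3 : ℝ) : ℂ) ^ 2 = 3 := by norm_cast; simp
  rw [bC_eq]; push_cast
  linear_combination (I ^ 2 / 4) * h3 + (3 / 4) * I_sq

lemma α_pow_three : α ^ 3 = conj bC := by
  rw [α, bC, ← exp_nat_mul, ← exp_conj]
  congr 1
  simp only [map_mul, map_neg, map_div₀, conj_ofReal, conj_I, map_ofNat]
  push_cast; ring

lemma r_pow_three : r ^ 3 = 1 := by
  rw [r, ← exp_nat_mul, ← exp_two_pi_mul_I]
  congr 1; push_cast; ring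

lemma norm_α : ‖α‖ = 1 := by
  rw [α, show (Real.pi : ℂ) / 9 * I = ((Real.pi / 9 : ℝ) : ℂ) * I by push_cast; ring]
  exact norm_exp_ofReal_mul_I _

lemma norm_r : ‖r‖ = 1 := by
  rw [r, show 2 * (Real.pi : ℂ) / 3 * I = ((2 * Real.pi / 3 : ℝ) : ℂ) * I by push_cast; ring]
  exact norm_exp_ofReal_mul_I _

lemma r_pow_mul_pow_three (k : ℕ) (z : ℂ) : (r ^ k * z) ^ 3 = z ^ 3 := by
  rw [mul_pow, pow_right_comm, r_pow_three, one_pow, one_mul]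

lemma norm_r_pow_mul (k : ℕ) (z : ℂ) : ‖r ^ k * z‖ = ‖z‖ := by
  rw [norm_mul, norm_pow, norm_r, one_pow, one_mul]

def j6u (u v : ℂ) : ℂ :=
  3 * (2 - 8 * bC) * u ^ 2 - 6 * bC * u ^ 5 + 6 * v + 24 * bC * u ^ 3 * v - 9 * u * v ^ 2

def j6v (u v : ℂ) : ℂ := 6 * u + 6 * bC * u ^ 4 - 9 * u ^ 2 * v

lemma hasDerivAt_j6 {f g : ℂ → ℂ} {f' g' w : ℂ} (hf : HasDerivAt f f' w)
    (hg : HasDerivAt g g' w) :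
    HasDerivAt (fun w => j6 (f w) (g w)) (j6u (f w) (g w) * f' + j6v (f w) (g w) * g') w := by
  have h := (((((hf.pow 3).const_mul (2 - 8 * bC)).sub ((hf.pow 6).const_mul bC)).add
    ((hf.mul hg).const_mul 6)).add (((hf.pow 4).mul hg).const_mul (6 * bC))).sub
    (((hf.pow 2).mul (hg.pow 2)).const_mul (9 / 2))
  refine (h.congr_deriv ?_).congr_of_eventuallyEq (.of_forall fun w => ?_)
  · simp only [j6u, j6v, Pi.pow_apply]; push_cast; ring
  · simp only [j6, Pi.add_apply, Pi.sub_apply, Pi.mul_apply, Pi.pow_apply]; ring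

/-- The Wirtinger derivative `∂J₆/∂z = (∂ₓJ₆ - i ∂ᵧJ₆) / 2`. -/
def wirtingerJ6 (z : ℂ) : ℂ := j6u z (conj z) + conj (j6v z (conj z))

lemma ofReal_re_sub_ofReal_im_mul_I (z : ℂ) : (z.re : ℂ) - z.im * I = conj z := by
  apply Complex.ext <;> simp

lemma J6_eq (z : ℂ) : J6 (z.re, z.im) = -1 + 2 * (j6 z (conj z)).re := by
  simp only [J6, re_add_im, ofReal_re_sub_ofReal_im_mul_I]

lemma pdx_J6 (z : ℂ) : pdx J6 (z.re, z.im) = 2 * (wirtingerJ6 z).re := by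
  have hu : HasDerivAt (fun w : ℂ => w + z.im * I) 1 z.re := (hasDerivAt_id _).add_const _
  have hv : HasDerivAt (fun w : ℂ => w - z.im * I) 1 z.re := (hasDerivAt_id _).sub_const _
  have h : HasDerivAt (fun t => J6 (t, z.im)) _ z.re :=
    (((hasDerivAt_j6 hu hv).real_of_complex).const_mul 2).const_add (-1)
  rw [pdx]; dsimp only; rw [h.deriv]
  simp only [re_add_im, ofReal_re_sub_ofReal_im_mul_I, mul_one, add_re, wirtingerJ6, conj_re]

lemma pdy_J6 (z : ℂ) : pdy J6 (z.re, z.im) = -2 * (wirtingerJ6 z).im := by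
  have hu : HasDerivAt (fun w : ℂ => z.re + w * I) I z.im := by
    simpa using ((hasDerivAt_id (z.im : ℂ)).mul_const I).const_add (z.re : ℂ)
  have hv : HasDerivAt (fun w : ℂ => z.re - w * I) (-I) z.im := by
    simpa using ((hasDerivAt_id (z.im : ℂ)).mul_const I).const_sub (z.re : ℂ)
  have h : HasDerivAt (fun t => J6 (z.re, t)) _ z.im :=
    (((hasDerivAt_j6 hu hv).real_of_complex).const_mul 2).const_add (-1)
  rw [pdy]; dsimp only; rw [h.deriv]
  simp only [re_add_im, ofReal_re_sub_ofReal_im_mul_I, wirtingerJ6, add_re, mul_re, I_re, I_im,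
    neg_re, neg_im, conj_im, add_im]
  ring

lemma j6_eq_cube (u v : ℂ) :
    j6 u v = (2 - 8 * bC) * u ^ 3 - bC * (u ^ 3) ^ 2 + 6 * (u * v) + 6 * bC * u ^ 3 * (u * v)
      - 9 / 2 * (u * v) ^ 2 := by
  simp only [j6]; ring

lemma mul_wirtingerJ6 (z : ℂ) :
    z * wirtingerJ6 z = 3 * (2 - 8 * bC) * z ^ 3 - 6 * bC * (z ^ 3) ^ 2 + 12 * (z * conj z)
      + 24 * bC * z ^ 3 * (z * conj z) - 18 * (z * conj z) ^ 2
      + 6 * (1 - bC) * (z * conj z) * conj (z ^ 3) := by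
  simp only [wirtingerJ6, j6u, j6v, map_add, map_sub, map_mul, map_pow, map_ofNat, conj_conj,
    conj_bC]
  ring

lemma J6_critical {z : ℂ} {v : ℝ} (hW : wirtingerJ6 z = 0)
    (hj : (j6 z (conj z)).re = (v + 1) / 2) :
    pdx J6 (z.re, z.im) = 0 ∧ pdy J6 (z.re, z.im) = 0 ∧ J6 (z.re, z.im) = v := by
  refine ⟨?_, ?_, ?_⟩
  · rw [pdx_J6, hW, zero_re, mul_zero]
  · rw [pdy_J6, hW, zero_im, mul_zero]
  · rw [J6_eq, hj]; ring

lemma J6_critical_of_pow_three_eq_conj_bC {z : ℂ} (h3 : z ^ 3 = conj bC) (hn : ‖z‖ = 1) :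
    pdx J6 (z.re, z.im) = 0 ∧ pdy J6 (z.re, z.im) = 0 ∧ J6 (z.re, z.im) = -1 := by
  have hc : z * conj z = 1 := by rw [mul_conj', hn]; norm_num
  have hz : z ≠ 0 := by rintro rfl; simp at hn
  refine J6_critical ?_ ?_
  · have h := mul_wirtingerJ6 z
    rw [h3, hc, conj_conj, conj_bC] at h
    refine (mul_eq_zero.mp ?_).resolve_left hz
    linear_combination h + (-6 * bC) * bC_sq
  · have h : j6 z (conj z) = 1 / 2 - bC := by
      rw [j6_eq_cube, h3, hc, conj_bC]
      linear_combination (3 - bC) * bC_sq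
    rw [h, sub_re, bC_re]; norm_num

lemma J6_critical_of_pow_three_eq_bC {z : ℂ} (h3 : z ^ 3 = bC) (hn : ‖z‖ = 1) :
    pdx J6 (z.re, z.im) = 0 ∧ pdy J6 (z.re, z.im) = 0 ∧ J6 (z.re, z.im) = 8 := by
  have hc : z * conj z = 1 := by rw [mul_conj', hn]; norm_num
  have hz : z ≠ 0 := by rintro rfl; simp at hn
  refine J6_critical ?_ ?_
  · have h := mul_wirtingerJ6 z
    rw [h3, hc, conj_bC] at h
    refine (mul_eq_zero.mp ?_).resolve_left hz
    linear_combination h + (-6 * bC) * bC_sq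
  · have h : j6 z (conj z) = 9 / 2 := by
      rw [j6_eq_cube, h3, hc]
      linear_combination (-3 - bC) * bC_sq
    rw [h]; norm_num

lemma J6_critical_of_pow_three_eq_eight {z : ℂ} (h3 : z ^ 3 = 8) (hn : ‖z‖ = 2) :
    pdx J6 (z.re, z.im) = 0 ∧ pdy J6 (z.re, z.im) = 0 ∧ J6 (z.re, z.im) = -1 := by
  have hc : z * conj z = 4 := by rw [mul_conj', hn]; norm_num
  have hz : z ≠ 0 := by rintro rfl; simp at hn
  refine J6_critical ?_ ?_
  · have h := mul_wirtingerJ6 z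
    rw [h3, hc, map_ofNat] at h
    refine (mul_eq_zero.mp ?_).resolve_left hz
    linear_combination h
  · have h : j6 z (conj z) = 64 * bC - 32 := by
      rw [j6_eq_cube, h3, hc]; ring
    rw [h, sub_re, mul_re, bC_re]; norm_num

lemma J6_critical_zero :
    pdx J6 ((0 : ℂ).re, (0 : ℂ).im) = 0 ∧ pdy J6 ((0 : ℂ).re, (0 : ℂ).im) = 0 ∧
      J6 ((0 : ℂ).re, (0 : ℂ).im) = -1 :=
  J6_critical (by simp [wirtingerJ6, j6u, j6v]) (by simp [j6])

/-- At each of `0, α, rα, r²α, 2, 2r, 2r²` the gradient of `J₆` vanishes and `J₆ = -1`;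
at each of the conjugates of `α, rα, r²α` the gradient of `J₆` vanishes and `J₆ = 8`. -/
theorem stmt1 :
    (∀ z ∈ ({0, α, r * α, r ^ 2 * α, 2, 2 * r, 2 * r ^ 2} : Set ℂ),
      pdx J6 (z.re, z.im) = 0 ∧ pdy J6 (z.re, z.im) = 0 ∧ J6 (z.re, z.im) = -1) ∧
    (∀ z ∈ ({(starRingEnd ℂ) α, (starRingEnd ℂ) (r * α), (starRingEnd ℂ) (r ^ 2 * α)} :
        Set ℂ),
      pdx J6 (z.re, z.im) = 0 ∧ pdy J6 (z.re, z.im) = 0 ∧ J6 (z.re, z.im) = 8) := by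
  refine ⟨fun z hz => ?_, fun z hz => ?_⟩ <;>
    simp only [Set.mem_insert_iff, Set.mem_singleton_iff] at hz
  · rcases hz with rfl | hz
    · exact J6_critical_zero
    obtain ⟨k, rfl | rfl⟩ : ∃ k : ℕ, z = r ^ k * α ∨ z = r ^ k * 2 := by
      rcases hz with rfl | rfl | rfl | rfl | rfl | rfl
      exacts [⟨0, .inl (by simp)⟩, ⟨1, .inl (by simp)⟩, ⟨2, .inl rfl⟩,
        ⟨0, .inr (by simp)⟩, ⟨1, .inr (by simp [mul_comm])⟩, ⟨2, .inr (mul_comm _ _)⟩]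
    · exact J6_critical_of_pow_three_eq_conj_bC (by rw [r_pow_mul_pow_three, α_pow_three])
        (by rw [norm_r_pow_mul, norm_α])
    · exact J6_critical_of_pow_three_eq_eight (by rw [r_pow_mul_pow_three]; norm_num)
        (by rw [norm_r_pow_mul]; norm_num)
  · obtain ⟨k, rfl⟩ : ∃ k : ℕ, z = conj (r ^ k * α) := by
      rcases hz with rfl | rfl | rfl
      exacts [⟨0, by simp⟩, ⟨1, by simp⟩, ⟨2, rfl⟩]
    exact J6_critical_of_pow_three_eq_bC
      (by rw [← map_pow, r_pow_mul_pow_three, α_pow_three, conj_conj])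
      (by rw [norm_conj, norm_r_pow_mul, norm_α])
end
end

section
/- Let f ∈ ℂ[x,y,z] be the cubic f = −1 + 3x² − x³ − 3√3·x²y + 3y² + 3xy² + √3·y³ + (3z² − z³)/4. Then the complex vector space ℂ[x,y,z]/⟨f, ∂f/∂x, ∂f/∂y, ∂f/∂z⟩ has dimension 4, i.e. the total Tjurina number of f is 4. -/
/-!
The Jacobian ideal `J = ⟨f, f_x, f_y, f_z⟩` has the lexicographic Gröbner basis
`q(x) = 8x⁴ - 6x² - x`, `y - (√3/3)(11x + 4x² - 16x³)`, `z - (2 + 12x - 16x³)`; the cofactors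
expressing these through the generators (and conversely) come from that computation. Hence `x`
generates `ℂ[x,y,z]/J` subject only to `q(x) = 0`: sending `x` to the root `ρ` of `q` identifies
`ℂ[x,y,z]/J` with `ℂ[T]/(q)`, of dimension `deg q = 4`. The roots of `q` are `0` and
`cos(π/9), cos(5π/9), cos(7π/9)`, the `x`-coordinates of the four nodes.
-/

noncomputable section

open MvPolynomial

@[simp]
theorem Derivation.map_ofNat {R A M : Type*} [CommSemiring R] [CommSemiring A] [AddCommMonoid M]
    [Algebra R A] [Module A M] [Module R M] (D : Derivation R A M) (n : ℕ) [n.AtLeastTwo] :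
    D (no_index (OfNat.ofNat n)) = 0 :=
  D.map_natCast n

lemma isUnit_ofNat_of_ratAlgebra {A : Type*} [Semiring A] [Algebra ℚ A] (n : ℕ)
    [n.AtLeastTwo] : IsUnit (OfNat.ofNat n : A) := by
  rw [← map_ofNat (algebraMap ℚ A) n]
  exact (Ne.isUnit (OfNat.ofNat_ne_zero n)).map _

lemma map_sqrt_three_sq {A : Type*} [Semiring A] (φ : ℂ →+* A) : φ √3 ^ 2 = 3 := by
  rw [← map_pow, ← Complex.ofReal_pow, Real.sq_sqrt zero_le_three]; exact map_ofNat φ 3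

lemma three_mul_map_sqrt_three_div_three {A : Type*} [Semiring A] (φ : ℂ →+* A) :
    3 * φ (√3 / 3) = φ √3 := by
  rw [← map_ofNat φ 3, ← map_mul, mul_div_cancel₀ _ three_ne_zero]

lemma four_mul_map_one_div_four {A : Type*} [Semiring A] (φ : ℂ →+* A) : 4 * φ (1 / 4) = 1 := by
  rw [← map_ofNat φ 4, ← map_mul]; norm_num

def MvPolynomial.quotientAlgEquivAdjoinRoot {R σ : Type*} [CommRing R]
    (J : Ideal (MvPolynomial σ R)) (q : Polynomial R) (i : σ) (g : σ → Polynomial R)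
    (hgi : g i = Polynomial.X)
    (hq : Polynomial.aeval (X i) q ∈ J)
    (hg : ∀ j, X j - Polynomial.aeval (X i) (g j) ∈ J)
    (hJ : J ≤ RingHom.ker (aeval fun j ↦ Polynomial.aeval (AdjoinRoot.root q) (g j))) :
    (MvPolynomial σ R ⧸ J) ≃ₐ[R] AdjoinRoot q := by
  have hroot : q.eval₂ (Algebra.ofId R (MvPolynomial σ R ⧸ J) : R →+* _)
      (Ideal.Quotient.mkₐ R J (X i)) = 0 := by
    change Polynomial.aeval (Ideal.Quotient.mkₐ R J (X i)) q = 0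
    rw [Polynomial.aeval_algHom_apply, Ideal.Quotient.mkₐ_eq_mk, Ideal.Quotient.eq_zero_iff_mem]
    exact hq
  refine AlgEquiv.ofAlgHom (Ideal.Quotient.liftₐ J _ fun _ hp ↦ RingHom.mem_ker.1 (hJ hp))
    (AdjoinRoot.liftAlgHom q (Algebra.ofId R _) _ hroot)
    (AdjoinRoot.algHom_ext ?_) (Ideal.Quotient.algHom_ext R <| MvPolynomial.algHom_ext fun j ↦ ?_)
  · rw [AlgHom.comp_apply, AdjoinRoot.liftAlgHom_root, ← AlgHom.comp_apply,
      Ideal.Quotient.liftₐ_comp, aeval_X, hgi, Polynomial.aeval_X, AlgHom.id_apply]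
  · rw [AlgHom.comp_assoc, Ideal.Quotient.liftₐ_comp, AlgHom.comp_apply, aeval_X,
      ← Polynomial.aeval_algHom_apply, AdjoinRoot.liftAlgHom_root, Polynomial.aeval_algHom_apply,
      AlgHom.comp_apply, AlgHom.id_apply, eq_comm, Ideal.Quotient.mkₐ_eq_mk, Ideal.Quotient.eq]
    exact hg j

def cayleyCubic : MvPolynomial (Fin 3) ℂ :=
  C (-1) + C 3 * X 0 ^ 2 - X 0 ^ 3
      - C (3 * ((Real.sqrt 3 : ℝ) : ℂ)) * X 0 ^ 2 * X 1
      + C 3 * X 1 ^ 2 + C 3 * X 0 * X 1 ^ 2 + C ((Real.sqrt 3 : ℝ) : ℂ) * X 1 ^ 3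
      + C (3 / 4) * X 2 ^ 2 - C (1 / 4) * X 2 ^ 3

lemma cayleyCubic_eq : cayleyCubic = -1 + 3 * X 0 ^ 2 - X 0 ^ 3 - 3 * C (√3 : ℂ) * X 0 ^ 2 * X 1
    + 3 * X 1 ^ 2 + 3 * X 0 * X 1 ^ 2 + C (√3 : ℂ) * X 1 ^ 3
    + C (1 / 4) * (3 * X 2 ^ 2 - X 2 ^ 3) := by
  rw [cayleyCubic, show (3 / 4 : ℂ) = 3 * (1 / 4) by norm_num, C_mul, C_mul, C_neg, map_one,
    map_ofNat C 3]
  ring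

lemma four_mul_cayleyCubic : 4 * cayleyCubic = -4 + 12 * X 0 ^ 2 - 4 * X 0 ^ 3
    - 12 * C (√3 : ℂ) * X 0 ^ 2 * X 1 + 12 * X 1 ^ 2 + 12 * X 0 * X 1 ^ 2
    + 4 * C (√3 : ℂ) * X 1 ^ 3 + 3 * X 2 ^ 2 - X 2 ^ 3 := by
  rw [cayleyCubic_eq]
  linear_combination (3 * X 2 ^ 2 - X 2 ^ 3) * four_mul_map_one_div_four C

lemma pderiv_zero_cayleyCubic : pderiv 0 cayleyCubic =
    (6 * X 0 - 3 * X 0 ^ 2 - 6 * C (√3 : ℂ) * X 0 * X 1 + 3 * X 1 ^ 2 :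
      MvPolynomial (Fin 3) ℂ) := by
  simp only [cayleyCubic_eq, map_add, map_sub, map_neg, Derivation.leibniz,
    Derivation.leibniz_pow, Derivation.map_one_eq_zero, Derivation.map_ofNat, derivation_C,
    pderiv_X, Pi.single_apply, Fin.reduceEq, ↓reduceIte, smul_eq_mul, nsmul_eq_mul]
  ring

lemma pderiv_one_cayleyCubic : pderiv 1 cayleyCubic =
    (-3 * C (√3 : ℂ) * X 0 ^ 2 + 6 * X 0 * X 1 + 3 * C (√3 : ℂ) * X 1 ^ 2 + 6 * X 1 :
      MvPolynomial (Fin 3) ℂ) := by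
  simp only [cayleyCubic_eq, map_add, map_sub, map_neg, Derivation.leibniz,
    Derivation.leibniz_pow, Derivation.map_one_eq_zero, Derivation.map_ofNat, derivation_C,
    pderiv_X, Pi.single_apply, Fin.reduceEq, ↓reduceIte, smul_eq_mul, nsmul_eq_mul]
  ring

lemma four_mul_pderiv_two_cayleyCubic :
    4 * pderiv 2 cayleyCubic = (6 * X 2 - 3 * X 2 ^ 2 : MvPolynomial (Fin 3) ℂ) := by
  simp only [cayleyCubic_eq, map_add, map_sub, map_neg, Derivation.leibniz,
    Derivation.leibniz_pow, Derivation.map_one_eq_zero, Derivation.map_ofNat, derivation_C,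
    pderiv_X, Pi.single_apply, Fin.reduceEq, ↓reduceIte, smul_eq_mul, nsmul_eq_mul]
  linear_combination (6 * X 2 - 3 * X 2 ^ 2) * four_mul_map_one_div_four C

abbrev cayleyJacobian : Ideal (MvPolynomial (Fin 3) ℂ) :=
  Ideal.span {cayleyCubic, pderiv 0 cayleyCubic, pderiv 1 cayleyCubic, pderiv 2 cayleyCubic}

lemma combination_mem_cayleyJacobian (a b c d : MvPolynomial (Fin 3) ℂ) :
    a * (4 * cayleyCubic) + b * pderiv 0 cayleyCubic + c * pderiv 1 cayleyCubic
      + d * (4 * pderiv 2 cayleyCubic) ∈ cayleyJacobian := by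
  refine add_mem (add_mem (add_mem ?_ ?_) ?_) ?_ <;> refine Ideal.mul_mem_left _ _ ?_
  exacts [Ideal.mul_mem_left _ _ (Ideal.subset_span (by simp)), Ideal.subset_span (by simp),
    Ideal.subset_span (by simp), Ideal.mul_mem_left _ _ (Ideal.subset_span (by simp))]

def nodePoly : Polynomial ℂ := 8 * Polynomial.X ^ 4 - 6 * Polynomial.X ^ 2 - Polynomial.X

def nodeCoords : Fin 3 → Polynomial ℂ :=
  ![(Polynomial.X : Polynomial ℂ),
    Polynomial.C ((√3 : ℂ) / 3)
      * (11 * Polynomial.X + 4 * Polynomial.X ^ 2 - 16 * Polynomial.X ^ 3),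
    2 + 12 * Polynomial.X - 16 * Polynomial.X ^ 3]

lemma aeval_nodePoly_mem_cayleyJacobian : Polynomial.aeval (X 0) nodePoly ∈ cayleyJacobian := by
  rw [← Ideal.unit_mul_mem_iff_mem _ (isUnit_ofNat_of_ratAlgebra 12)]
  convert combination_mem_cayleyJacobian 0
    (-8 * X 0 ^ 2 - 4 * C (√3 : ℂ) * X 0 * X 1 - 13 * X 0 - C (√3 : ℂ) * X 1 - 2)
    (-8 * C (√3 : ℂ) * X 0 ^ 2 + 4 * X 0 * X 1 - C (√3 : ℂ) * X 0 + X 1) 0 using 1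
  rw [pderiv_zero_cayleyCubic, pderiv_one_cayleyCubic]
  simp only [nodePoly, map_sub, map_mul, map_pow, map_ofNat, Polynomial.aeval_X]
  linear_combination (-24 * X 0 ^ 4 - 3 * X 0 ^ 3 - 3 * X 0 * X 1 ^ 2) * map_sqrt_three_sq C

lemma X_sub_aeval_nodeCoords_mem_cayleyJacobian (j : Fin 3) :
    X j - Polynomial.aeval (X 0) (nodeCoords j) ∈ cayleyJacobian := by
  fin_cases j
  · simp [nodeCoords]
  · rw [← Ideal.unit_mul_mem_iff_mem _ (isUnit_ofNat_of_ratAlgebra 18)]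
    convert combination_mem_cayleyJacobian 0
      (-8 * C (√3 : ℂ) * X 0 - 12 * X 1 - 11 * C (√3 : ℂ)) (-24 * X 0 + 4 * C (√3 : ℂ) * X 1 + 3) 0
      using 1
    rw [pderiv_zero_cayleyCubic, pderiv_one_cayleyCubic]
    simp only [nodeCoords, Fin.mk_one, Matrix.cons_val_one, Matrix.cons_val_zero, map_add, map_sub,
      map_mul, map_pow, map_ofNat, Polynomial.aeval_X, Polynomial.aeval_C, algebraMap_eq]
    linear_combination
      (-36 * X 0 ^ 2 * X 1 - 12 * X 1 ^ 3 - 66 * X 0 * X 1) * map_sqrt_three_sq C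
      + (96 * X 0 ^ 3 - 24 * X 0 ^ 2 - 66 * X 0) * three_mul_map_sqrt_three_div_three C
  · rw [← Ideal.unit_mul_mem_iff_mem _ (isUnit_ofNat_of_ratAlgebra 12)]
    convert combination_mem_cayleyJacobian 6 (-24 * X 0 - 8 * C (√3 : ℂ) * X 1 - 24)
      (-16 * C (√3 : ℂ) * X 0) (2 - 2 * X 2) using 1
    rw [four_mul_cayleyCubic, pderiv_zero_cayleyCubic, pderiv_one_cayleyCubic,
      four_mul_pderiv_two_cayleyCubic]
    simp only [nodeCoords, Fin.reduceFinMk, Matrix.cons_val, map_add, map_sub, map_mul, map_pow,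
      map_ofNat, Polynomial.aeval_X]
    linear_combination (-48 * X 0 ^ 3) * map_sqrt_three_sq C

def nodePoint : Fin 3 → AdjoinRoot nodePoly :=
  fun j ↦ Polynomial.aeval (AdjoinRoot.root nodePoly) (nodeCoords j)

section NodePoint

local notation "ρ" => AdjoinRoot.root nodePoly
local notation "ι" => algebraMap ℂ (AdjoinRoot nodePoly)
local notation "ς" => ι (√3 : ℂ)
local notation "κ" => ι ((√3 : ℂ) / 3)

lemma nodePoint_zero : nodePoint 0 = ρ := by
  simp [nodePoint, nodeCoords]

lemma nodePoint_one : nodePoint 1 = κ * (11 * ρ + 4 * ρ ^ 2 - 16 * ρ ^ 3) := by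
  simp only [nodePoint, nodeCoords, Matrix.cons_val_one, Matrix.cons_val_zero, map_add, map_sub,
    map_mul, map_pow, map_ofNat, Polynomial.aeval_X, Polynomial.aeval_C]

lemma nodePoint_two : nodePoint 2 = 2 + 12 * ρ - 16 * ρ ^ 3 := by
  simp only [nodePoint, nodeCoords, Matrix.cons_val, map_add, map_sub, map_mul, map_pow, map_ofNat,
    Polynomial.aeval_X]

lemma root_nodePoly : 8 * ρ ^ 4 - 6 * ρ ^ 2 - ρ = 0 := by
  have h : Polynomial.aeval ρ (8 * Polynomial.X ^ 4 - 6 * Polynomial.X ^ 2 - Polynomial.X) = 0 :=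
    (AdjoinRoot.aeval_eq _).trans AdjoinRoot.mk_self
  simpa only [map_sub, map_mul, map_pow, map_ofNat, Polynomial.aeval_X] using h

lemma aeval_nodePoint_cayleyCubic : aeval nodePoint cayleyCubic = 0 := by
  have h : aeval nodePoint (4 * cayleyCubic) = 0 := by
    rw [four_mul_cayleyCubic]
    simp only [map_add, map_sub, map_mul, map_pow, map_neg, map_ofNat, aeval_X, aeval_C,
      nodePoint_zero, nodePoint_one, nodePoint_two]
    linear_combination
      (-2048 * ρ ^ 5 * ς * κ ^ 3 + 1536 * ρ ^ 4 * ς * κ ^ 3 + 2304 * ρ ^ 3 * ς * κ ^ 3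
        - 1184 * ρ ^ 2 * ς * κ ^ 3 + 512 * ρ ^ 5 + 384 * ρ ^ 3 * κ ^ 2 - 720 * ρ * ς * κ ^ 3
        + 192 * ρ ^ 2 * κ ^ 2 + 126 * ς * κ ^ 3 - 768 * ρ ^ 3 + 24 * ρ * ς * κ - 408 * ρ * κ ^ 2
        - 32 * ρ ^ 2 - 6 * ς * κ - 180 * κ ^ 2 + 288 * ρ + 24) * root_nodePoly
      + (-60 * ρ ^ 3 * κ ^ 2 + 12 * ρ ^ 2 * κ ^ 2 + 12 * ρ ^ 3 + 42 * ρ * κ ^ 2 - 4 * ρ ^ 2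
        - 8 * ρ) * map_sqrt_three_sq ι
      + (-60 * ρ ^ 3 * ς * κ ^ 2 + 12 * ρ ^ 2 * ς * κ ^ 2 + 12 * ρ ^ 3 * ς + 24 * ρ ^ 3 * κ
        + 42 * ρ * ς * κ ^ 2 - 4 * ρ ^ 2 * ς - 8 * ρ * ς - 18 * ρ * κ)
        * three_mul_map_sqrt_three_div_three ι
  rwa [map_mul, map_ofNat, (isUnit_ofNat_of_ratAlgebra 4).mul_right_eq_zero] at h

lemma aeval_nodePoint_pderiv_zero_cayleyCubic : aeval nodePoint (pderiv 0 cayleyCubic) = 0 := by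
  rw [pderiv_zero_cayleyCubic]
  simp only [map_add, map_sub, map_mul, map_pow, map_ofNat, aeval_X, aeval_C, nodePoint_zero,
    nodePoint_one]
  linear_combination
    (96 * ρ ^ 2 * κ ^ 2 - 48 * ρ * κ ^ 2 + 12 * ς * κ - 54 * κ ^ 2) * root_nodePoly
    + (ρ ^ 2 - 2 * ρ) * map_sqrt_three_sq ι
    + (24 * ρ ^ 3 * κ + ρ ^ 2 * ς - 3 * ρ ^ 2 * κ - 2 * ρ * ς - 18 * ρ * κ)
      * three_mul_map_sqrt_three_div_three ι

lemma aeval_nodePoint_pderiv_one_cayleyCubic : aeval nodePoint (pderiv 1 cayleyCubic) = 0 := by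
  rw [pderiv_one_cayleyCubic]
  simp only [map_add, map_mul, map_pow, map_neg, map_ofNat, aeval_X, aeval_C,
    nodePoint_zero, nodePoint_one]
  linear_combination
    (96 * ρ ^ 2 * ς * κ ^ 2 - 48 * ρ * ς * κ ^ 2 - 54 * ς * κ ^ 2 - 12 * κ) * root_nodePoly
    + (24 * ρ ^ 3 * κ - 3 * ρ ^ 2 * κ - 18 * ρ * κ) * map_sqrt_three_sq ι
    + (24 * ρ ^ 3 * ς * κ - 3 * ρ ^ 2 * ς * κ - 18 * ρ * ς * κ + 3 * ρ ^ 2)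
      * three_mul_map_sqrt_three_div_three ι

lemma aeval_nodePoint_pderiv_two_cayleyCubic : aeval nodePoint (pderiv 2 cayleyCubic) = 0 := by
  have h : aeval nodePoint (4 * pderiv 2 cayleyCubic) = 0 := by
    rw [four_mul_pderiv_two_cayleyCubic]
    simp only [map_sub, map_mul, map_pow, map_ofNat, aeval_X, nodePoint_two]
    linear_combination (72 - 96 * ρ ^ 2) * root_nodePoly
  rwa [map_mul, map_ofNat, (isUnit_ofNat_of_ratAlgebra 4).mul_right_eq_zero] at h

end NodePoint

lemma cayleyJacobian_le_ker : cayleyJacobian ≤ RingHom.ker (aeval nodePoint) := by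
  rw [Ideal.span_le]
  rintro p (rfl | rfl | rfl | rfl)
  exacts [aeval_nodePoint_cayleyCubic, aeval_nodePoint_pderiv_zero_cayleyCubic,
    aeval_nodePoint_pderiv_one_cayleyCubic, aeval_nodePoint_pderiv_two_cayleyCubic]

lemma natDegree_nodePoly : nodePoly.natDegree = 4 := by
  unfold nodePoly; compute_degree!

open MvPolynomial in
/-- The total Tjurina number of the Cayley-type cubic
`f = -1 + 3x² - x³ - 3√3 x²y + 3y² + 3xy² + √3 y³ + (3z² - z³)/4` is 4. -/
theorem stmt8 (f : MvPolynomial (Fin 3) ℂ)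
    (hf : f = C (-1) + C 3 * X 0 ^ 2 - X 0 ^ 3
      - C (3 * ((Real.sqrt 3 : ℝ) : ℂ)) * X 0 ^ 2 * X 1
      + C 3 * X 1 ^ 2 + C 3 * X 0 * X 1 ^ 2 + C ((Real.sqrt 3 : ℝ) : ℂ) * X 1 ^ 3
      + C (3 / 4) * X 2 ^ 2 - C (1 / 4) * X 2 ^ 3) :
    Module.finrank ℂ
      (MvPolynomial (Fin 3) ℂ ⧸
        Ideal.span ({f, pderiv 0 f, pderiv 1 f, pderiv 2 f} :
          Set (MvPolynomial (Fin 3) ℂ))) = 4 := by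
  obtain rfl : f = cayleyCubic := hf
  have e : (MvPolynomial (Fin 3) ℂ ⧸ cayleyJacobian) ≃ₐ[ℂ] AdjoinRoot nodePoly :=
    quotientAlgEquivAdjoinRoot cayleyJacobian nodePoly 0 nodeCoords rfl
      aeval_nodePoly_mem_cayleyJacobian X_sub_aeval_nodeCoords_mem_cayleyJacobian
      cayleyJacobian_le_ker
  rw [e.toLinearEquiv.finrank_eq, ← natDegree_nodePoly]
  exact finrank_quotient_span_eq_natDegree
end
end

section
/- Let u ∈ ℂ satisfy u⁹ = −18, and let a, b ∈ ℂ be the two roots of z² − 3uz + 3u² = 0. Then there exists a constant C ∈ ℂ, C ≠ 0, such that the degree-9 polynomial P defined by P(0) = −1 and P′(z) = C·z²·(z−a)²·(z−b)²·(z−u)² satisfies P(a) = P(b) = −1 and P(u) = 1. In particular P is a Belyi polynomial with exactly two critical values −1 and 1: the critical points 0, a, b (each a zero of P′ of order 2) have critical value −1, and the critical point u (a zero of P′ of order 2) has critical value 1. -/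
/-!
Put `Q = z(z - a)(z - b)`. By Vieta, `(z - a)(z - b) = z² - 3uz + 3u²`, so
`Q = (z - u)³ + u³` and `Q' = 3(z - u)²`. Then `P = -Q³/9 - 1` has
`P' = -Q²(z - u)² = -z²(z - a)²(z - b)²(z - u)²`, equals `-1` at the zeros `0, a, b` of `Q`,
and `P(u) = -u⁹/9 - 1 = 1`.
-/

open Polynomial

theorem X_sub_C_mul_X_sub_C_eq_of_ne {R : Type*} [CommRing R] [IsDomain R] {s p a b : R}
    (hab : a ≠ b) (ha : a ^ 2 - s * a + p = 0) (hb : b ^ 2 - s * b + p = 0) :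
    (X - C a) * (X - C b) = X ^ 2 - C s * X + C p := by
  have hsum : a + b = s := by
    have h : (a - b) * (a + b - s) = 0 := by linear_combination ha - hb
    linear_combination (mul_eq_zero.mp h).resolve_left (sub_ne_zero.mpr hab)
  have hprod : a * b = p := by linear_combination a * hsum - ha
  rw [← hsum, ← hprod, C_add, C_mul]
  ring

theorem X_mul_quadratic_eq_X_sub_C_pow_three_add_C {R : Type*} [CommRing R] (u : R) :
    X * (X ^ 2 - C (3 * u) * X + C (3 * u ^ 2)) = (X - C u) ^ 3 + C (u ^ 3) := by
  simp only [C_mul, C_pow, C_ofNat]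
  ring

theorem derivative_X_sub_C_pow_three_add_C {R : Type*} [CommRing R] (u k : R) :
    derivative ((X - C u) ^ 3 + C k) = C 3 * (X - C u) ^ 2 := by
  simp [derivative_pow]

theorem derivative_C_mul_pow_three_add_C {R : Type*} [CommRing R] (Q : R[X]) (k m : R) :
    derivative (C k * Q ^ 3 + C m) = C (3 * k) * Q ^ 2 * derivative Q := by
  simp [derivative_pow]
  ring

open Polynomial in
/-- For `u` with `u⁹ = -18` and `a, b` the two roots of `z² - 3uz + 3u² = 0`, there is a
nonzero constant `c` such that the degree-9 polynomial `P` with `P(0) = -1` and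
`P' = c·z²(z-a)²(z-b)²(z-u)²` satisfies `P(a) = P(b) = -1` and `P(u) = 1`; so `P` is a Belyi
polynomial with critical values `-1` (at the order-2 critical points `0, a, b`) and `1`
(at the order-2 critical point `u`). -/
theorem stmt19 (u a b : ℂ) (hu : u ^ 9 = -18)
    (ha : a ^ 2 - 3 * u * a + 3 * u ^ 2 = 0)
    (hb : b ^ 2 - 3 * u * b + 3 * u ^ 2 = 0) (hab : a ≠ b) :
    ∃ c : ℂ, c ≠ 0 ∧ ∃ P : Polynomial ℂ,
      P.degree = 9 ∧ P.eval 0 = -1 ∧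
      derivative P = Polynomial.C c * (X ^ 2 * (X - Polynomial.C a) ^ 2 *
        (X - Polynomial.C b) ^ 2 * (X - Polynomial.C u) ^ 2) ∧
      P.eval a = -1 ∧ P.eval b = -1 ∧ P.eval u = 1 := by
  set Q : ℂ[X] := X * (X - C a) * (X - C b)
  have hQ : Q = (X - C u) ^ 3 + C (u ^ 3) := by
    rw [show Q = X * ((X - C a) * (X - C b)) from mul_assoc _ _ _,
      X_sub_C_mul_X_sub_C_eq_of_ne hab ha hb, X_mul_quadratic_eq_X_sub_C_pow_three_add_C]
  have hQ' : derivative Q = C 3 * (X - C u) ^ 2 := by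
    rw [hQ, derivative_X_sub_C_pow_three_add_C]
  have hconst : C (3 * (-1 / 9 : ℂ)) * C 3 = C (-1) := by rw [← C_mul]; norm_num
  refine ⟨-1, by norm_num, C (-1 / 9) * Q ^ 3 + C (-1), ?_, by simp [Q], ?_,
    by simp [Q], by simp [Q], ?_⟩
  · simp only [Q]
    compute_degree!
  · rw [derivative_C_mul_pow_three_add_C, hQ']
    linear_combination (Q ^ 2 * (X - C u) ^ 2) * hconst
  · simp only [hQ, eval_add, eval_mul, eval_pow, eval_sub, eval_C, eval_X, sub_self]
    linear_combination (-1 / 9 : ℂ) * hu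
end
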